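/- arXiv:2001.02303 — 2 statements merged into one kernel-verified Lean document; each statement's English description precedes it below -/
import Mathlib

section
/- Let M be a free ℤ-module of finite rank, B : M × M → ℤ a ℤ-bilinear form, δ ∈ M a primitive element with B(δ,δ) = 0, and suppose there exists γ ∈ M with B(δ,γ) = 1. Let T : M → M be the Picard–Lefschetz transvection T(η) = η + B(δ,η) • δ, and let T_ℚ denote the induced endomorphism of M ⊗ℤ ℚ. Then, identifying M with its image in M ⊗ℤ ℚ, one has ((T_ℚ − id)(M ⊗ ℚ)) ∩ M = ℤ·δ = (T − id)(M); equivalently, every x ∈ M lying in the image of T_ℚ − id already lies in the image of T − id, so the quotient group (((T_ℚ − id)(M ⊗ ℚ)) ∩ M)/((T − id)M) is trivial. -/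
open TensorProduct

/-- The map `x ↦ (1:ℚ) ⊗ x` is injective on a flat (e.g. free) `ℤ`-module. -/
lemma mk_one_inj {M : Type*} [AddCommGroup M] [Module.Free ℤ M] :
    Function.Injective (TensorProduct.mk ℤ ℚ M 1) := by
  have h1 : Function.Injective ((Algebra.linearMap ℤ ℚ).rTensor M) :=
    Module.Flat.rTensor_preserves_injective_linearMap _
      (fun a b hab => by simpa using hab)
  intro x y hxy
  have hx : ∀ z : M, (Algebra.linearMap ℤ ℚ).rTensor M ((TensorProduct.lid ℤ M).symm z)
      = TensorProduct.mk ℤ ℚ M 1 z := by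
    intro z
    simp [TensorProduct.lid_symm_apply]
  have := h1 (by rw [hx, hx, hxy] : (Algebra.linearMap ℤ ℚ).rTensor M
      ((TensorProduct.lid ℤ M).symm x) = (Algebra.linearMap ℤ ℚ).rTensor M
      ((TensorProduct.lid ℤ M).symm y))
  exact (TensorProduct.lid ℤ M).symm.injective this

/-- **Lattice-theoretic core of Theorem 3.3 (vanishing of `G_i`).**
Let `M` be a free `ℤ`-module of finite rank, `B` a `ℤ`-bilinear form on `M`,
`δ ∈ M` primitive with `B δ δ = 0`, and `γ ∈ M` with `B δ γ = 1`.  Let `T`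
be the Picard–Lefschetz transvection `T η = η + B δ η • δ`, and `T_ℚ` the induced
endomorphism of `M ⊗ ℚ` (base change).  Identifying `M` with its image in `M ⊗ ℚ`
(via `x ↦ 1 ⊗ x`), we have `((T_ℚ - id)(M ⊗ ℚ)) ∩ M = ℤ·δ = (T - id)(M)`; in
particular the quotient `(((T_ℚ - id)(M ⊗ ℚ)) ∩ M)/((T - id)M)` is trivial. -/
theorem picard_lefschetz_rational_image_cap_lattice
    {M : Type*} [AddCommGroup M] [Module.Free ℤ M] [Module.Finite ℤ M]
    (B : M →ₗ[ℤ] M →ₗ[ℤ] ℤ) (δ : M) (hδ : B δ δ = 0)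
    (hδ0 : δ ≠ 0) (hprim : ∀ (n : ℤ) (δ' : M), δ = n • δ' → n = 1 ∨ n = -1)
    (γ : M) (hγ : B δ γ = 1)
    (T : M →ₗ[ℤ] M) (hT : ∀ η : M, T η = η + B δ η • δ) :
    Submodule.comap (TensorProduct.mk ℤ ℚ M 1)
        ((LinearMap.range (LinearMap.baseChange ℚ T - LinearMap.id)).restrictScalars ℤ)
      = Submodule.span ℤ ({δ} : Set M)
    ∧ Submodule.span ℤ ({δ} : Set M) = LinearMap.range (T - LinearMap.id) := by
  set f : M →ₗ[ℤ] M := T - LinearMap.id with hf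
  set S : ℚ ⊗[ℤ] M →ₗ[ℚ] ℚ ⊗[ℤ] M := LinearMap.baseChange ℚ T - LinearMap.id with hS
  have hTi : ∀ η : M, f η = B δ η • δ := by
    intro η
    simp [hf, hT η]
  have hStmul : ∀ (q : ℚ) (m : M), S (q ⊗ₜ[ℤ] m) = (q * (B δ m : ℚ)) • ((1:ℚ) ⊗ₜ[ℤ] δ) := by
    intro q m
    simp only [hS, LinearMap.sub_apply, LinearMap.baseChange_tmul, LinearMap.id_coe, id_eq,
      hT m]
    rw [TensorProduct.tmul_add, TensorProduct.tmul_smul]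
    rw [TensorProduct.smul_tmul', TensorProduct.smul_tmul']
    rw [← Int.cast_smul_eq_zsmul ℚ, add_sub_cancel_left]
    congr 1
    simp [smul_eq_mul, mul_comm]
  -- range of the rational map is contained in the ℚ-span of 1 ⊗ δ
  have hrange : ∀ y : ℚ ⊗[ℤ] M,
      S y ∈ Submodule.span ℚ ({(1:ℚ) ⊗ₜ[ℤ] δ} : Set (ℚ ⊗[ℤ] M)) := by
    intro y
    induction y using TensorProduct.induction_on with
    | zero => simp
    | tmul q m =>
        rw [hStmul q m]
        exact Submodule.smul_mem _ _ (Submodule.mem_span_singleton_self _)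
    | add a b ha hb =>
        rw [map_add]
        exact Submodule.add_mem _ ha hb
  constructor
  · apply le_antisymm
    · intro x hx
      rcases hx with ⟨y, hy⟩
      have hx' : (TensorProduct.mk ℤ ℚ M 1) x ∈
          Submodule.span ℚ ({(1:ℚ) ⊗ₜ[ℤ] δ} : Set (ℚ ⊗[ℤ] M)) := by
        rw [← hy]; exact hrange y
      rcases Submodule.mem_span_singleton.mp hx' with ⟨q, hq⟩
      -- clear denominators: q.den • x = q.num • δ in M
      have key : (q.den : ℤ) • x = q.num • δ := by
        apply mk_one_inj
        have h1 : (TensorProduct.mk ℤ ℚ M 1) ((q.den : ℤ) • x)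
            = (q.den : ℤ) • (TensorProduct.mk ℤ ℚ M 1) x := by simp
        have h2 : (TensorProduct.mk ℤ ℚ M 1) (q.num • δ)
            = (q.num : ℚ) • ((1:ℚ) ⊗ₜ[ℤ] δ) := by
          rw [map_zsmul, ← Int.cast_smul_eq_zsmul ℚ]
          rfl
        rw [h1, h2, ← hq, ← Int.cast_smul_eq_zsmul ℚ, smul_smul]
        congr 1
        push_cast
        rw [mul_comm]
        exact_mod_cast q.mul_den_eq_num
      -- coprimality + primitivity forces q.den = 1
      have hcop : IsCoprime q.num (q.den : ℤ) :=
        Int.isCoprime_iff_gcd_eq_one.mpr (by simpa [Int.gcd] using q.reduced)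
      rcases hcop with ⟨u, v, huv⟩
      have hδeq : δ = (q.den : ℤ) • (u • x + v • δ) := by
        have h3 : (q.den : ℤ) • (u • x + v • δ) = (u * q.num + v * q.den) • δ := by
          rw [smul_add, smul_comm ((q.den : ℤ)) u x, key, add_smul, mul_smul, mul_smul]
          rw [smul_comm ((q.den : ℤ)) v δ]
        rw [h3, huv, one_smul]
      have hden1 : (q.den : ℤ) = 1 := by
        rcases hprim _ _ hδeq with h | h
        · exact h
        · exfalso
          have := q.den_pos
          omega
      have hx2 : x = q.num • δ := by
        rw [hden1, one_smul] at key
        exact key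
      rw [hx2]
      exact Submodule.smul_mem _ _ (Submodule.mem_span_singleton_self _)
    · rw [Submodule.span_singleton_le_iff_mem]
      refine ⟨(1:ℚ) ⊗ₜ[ℤ] γ, ?_⟩
      show S ((1:ℚ) ⊗ₜ[ℤ] γ) = _
      rw [hStmul 1 γ, hγ]
      simp [TensorProduct.mk_apply]
  · apply le_antisymm
    · rw [Submodule.span_singleton_le_iff_mem]
      exact ⟨γ, by rw [hTi γ, hγ, one_smul]⟩
    · rintro _ ⟨η, rfl⟩
      rw [hTi η]
      exact Submodule.smul_mem _ _ (Submodule.mem_span_singleton_self _)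
end

section
/- Let V be a finite-dimensional ℚ-vector space, N : V → V a nilpotent ℚ-linear endomorphism, and m an integer. Then the monodromy weight filtration for N centered at m is unique: if (W_j)_{j∈ℤ} and (W'_j)_{j∈ℤ} are two increasing families of subspaces of V, each equal to 0 for j sufficiently small and to V for j sufficiently large, each satisfying N(W_j) ⊆ W_{j−2} for all j, and each such that for every l ≥ 0 the map induced by N^l from the (m+l)-th graded piece to the (m−l)-th graded piece is an isomorphism, then W_j = W'_j for all j ∈ ℤ. -/
/-- A *monodromy weight filtration* for an endomorphism `N` of a `ℚ`-vector space `V`,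
centered at `m`: an increasing family `(W j)_{j ∈ ℤ}` of subspaces of `V`, equal to `⊥`
for `j` sufficiently small and to `⊤` for `j` sufficiently large, with `N (W j) ⊆ W (j-2)`
for all `j`, and such that for every `l ≥ 0` the map induced by `N ^ l` from
`W (m+l) / W (m+l-1)` to `W (m-l) / W (m-l-1)` is an isomorphism (expressed below by:
`N ^ l (W (m+l))` together with `W (m-l-1)` spans `W (m-l)` — surjectivity on graded
pieces — and `x ∈ W (m+l)` with `N ^ l x ∈ W (m-l-1)` implies `x ∈ W (m+l-1)` —
injectivity on graded pieces). -/
def IsMonodromyWeightFiltration {V : Type*} [AddCommGroup V] [Module ℚ V]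
    (N : Module.End ℚ V) (m : ℤ) (W : ℤ → Submodule ℚ V) : Prop :=
  Monotone W ∧
  (∃ a : ℤ, ∀ j ≤ a, W j = ⊥) ∧
  (∃ b : ℤ, ∀ j, b ≤ j → W j = ⊤) ∧
  (∀ j : ℤ, Submodule.map N (W j) ≤ W (j - 2)) ∧
  (∀ l : ℕ,
    Submodule.map (N ^ l) (W (m + l)) ⊔ W (m - l - 1) = W (m - l) ∧
    ∀ x ∈ W (m + (l : ℤ)), (N ^ l) x ∈ W (m - l - 1) → x ∈ W (m + l - 1))

/-- Iterating the shift axiom: `N ^ l` maps `W j` into `W (j - 2 l)`. -/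
lemma pow_map_le {V : Type*} [AddCommGroup V] [Module ℚ V]
    (N : Module.End ℚ V) (W : ℤ → Submodule ℚ V)
    (hmap : ∀ j : ℤ, Submodule.map N (W j) ≤ W (j - 2)) :
    ∀ (l : ℕ) (j : ℤ), Submodule.map (N ^ l) (W j) ≤ W (j - 2 * l) := by
  intro l
  induction l with
  | zero => intro j; rw [pow_zero, Module.End.one_eq_id, Submodule.map_id]; simp
  | succ l ih =>
      intro j
      rw [pow_succ, Module.End.mul_eq_comp, Submodule.map_comp]
      calc Submodule.map (N ^ l) (Submodule.map N (W j))
          ≤ Submodule.map (N ^ l) (W (j - 2)) := Submodule.map_mono (hmap j)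
        _ ≤ W (j - 2 - 2 * l) := ih (j - 2)
        _ = W (j - 2 * (l + 1)) := by ring_nf

/-- Characterization of `W (m + l - 1)` inside `W (m + l)` via `N ^ l`. -/
lemma mem_pred_iff {V : Type*} [AddCommGroup V] [Module ℚ V]
    (N : Module.End ℚ V) (m : ℤ) (W : ℤ → Submodule ℚ V)
    (hW : IsMonodromyWeightFiltration N m W) (l : ℕ) (x : V) :
    x ∈ W (m + l - 1) ↔ x ∈ W (m + l) ∧ (N ^ l) x ∈ W (m - l - 1) := by
  obtain ⟨mono, -, -, hmap, hgr⟩ := hW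
  constructor
  · intro hx
    refine ⟨mono (by omega) hx, ?_⟩
    have h1 := pow_map_le N W hmap l (m + l - 1) (Submodule.mem_map_of_mem hx)
    exact mono (by omega) h1
  · rintro ⟨hx, hNx⟩
    exact (hgr l).2 x hx hNx

/-- **Uniqueness of the monodromy weight filtration** (Theorem 2.3 of the paper,
linear-algebra form).  For a nilpotent endomorphism `N` of a finite-dimensional
`ℚ`-vector space `V` and a center `m ∈ ℤ`, any two monodromy weight filtrations for
`N` centered at `m` coincide. -/
theorem monodromy_weight_filtration_unique
    {V : Type*} [AddCommGroup V] [Module ℚ V] [FiniteDimensional ℚ V]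
    (N : Module.End ℚ V) (hN : IsNilpotent N) (m : ℤ)
    (W W' : ℤ → Submodule ℚ V)
    (hW : IsMonodromyWeightFiltration N m W)
    (hW' : IsMonodromyWeightFiltration N m W') :
    ∀ j : ℤ, W j = W' j := by
  obtain ⟨mono, ⟨a, ha⟩, ⟨b, hb⟩, hmap, hgr⟩ := hW
  obtain ⟨mono', ⟨a', ha'⟩, ⟨b', hb'⟩, hmap', hgr'⟩ := hW'
  have hWfull : IsMonodromyWeightFiltration N m W :=
    ⟨mono, ⟨a, ha⟩, ⟨b, hb⟩, hmap, hgr⟩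
  have hW'full : IsMonodromyWeightFiltration N m W' :=
    ⟨mono', ⟨a', ha'⟩, ⟨b', hb'⟩, hmap', hgr'⟩
  set P : ℕ → Prop := fun l => W (m + l) = W' (m + l) ∧ W (m - l - 1) = W' (m - l - 1) with hP
  obtain ⟨L, hL1, hL2, hL3, hL4⟩ :
      ∃ L : ℕ, b ≤ m + L ∧ b' ≤ m + L ∧ m - L - 1 ≤ a ∧ m - L - 1 ≤ a' :=
    ⟨(max (max (b - m) (b' - m)) (max (m - a - 1) (m - a' - 1))).toNat, by omega, by omega,
      by omega, by omega⟩
  have htop : ∀ l : ℕ, L ≤ l → P l := by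
    intro l hl
    constructor
    · rw [hb _ (by omega), hb' _ (by omega)]
    · rw [ha _ (by omega), ha' _ (by omega)]
  have hstep : ∀ l : ℕ, P (l + 1) → P l := by
    intro l ⟨h1, h2⟩
    have hsur := (hgr (l + 1)).1
    have hsur' := (hgr' (l + 1)).1
    have hlow : W (m - l - 1) = W' (m - l - 1) := by
      have e : (m - (↑(l + 1) : ℤ)) = m - l - 1 := by push_cast; ring
      rw [e] at hsur hsur' h2
      rw [← hsur, ← hsur', h1, h2]
    refine ⟨?_, hlow⟩
    ext x
    have c1 := mem_pred_iff N m W hWfull (l + 1) x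
    have c2 := mem_pred_iff N m W' hW'full (l + 1) x
    rw [show (m + (↑(l + 1) : ℤ) - 1) = m + l from by push_cast; ring] at c1 c2
    rw [c1, c2, h1, h2]
  have hdown : ∀ k : ℕ, P (L - k) := by
    intro k
    induction k with
    | zero => exact htop L (by omega)
    | succ k ih =>
        rcases Nat.eq_zero_or_pos (L - k) with h | h
        · rw [show L - (k + 1) = 0 from by omega, ← h]; exact ih
        · have : L - k = (L - (k + 1)) + 1 := by omega
          exact hstep _ (this ▸ ih)
  have hall : ∀ l : ℕ, P l := by
    intro l
    rcases le_total L l with h | h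
    · exact htop l h
    · have := hdown (L - l)
      rwa [show L - (L - l) = l from by omega] at this
  intro j
  rcases le_or_gt m j with h | h
  · have := (hall (j - m).toNat).1
    rwa [show (m + ((j - m).toNat : ℤ)) = j from by omega] at this
  · have := (hall (m - 1 - j).toNat).2
    rwa [show (m - ((m - 1 - j).toNat : ℤ) - 1) = j from by omega] at this
end
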